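/- arXiv:2204.12802 — 8 statements merged into one kernel-verified Lean document; each statement's English description precedes it below -/
import Mathlib

section
/- Let A be the adjacency matrix of a finite simple undirected graph on N vertices and let A1 be the off-diagonal part of the symmetrically normalized adjacency matrix with added self-loops. Then the matrix I − A1 is positive definite: for every nonzero vector x ∈ ℝ^N, x^T (I − A1) x > 0. -/
/-!
With `w i = (d i + 1)^(-1/2)` and `y = w * x`, the zero diagonal of `A` makes `A1` the congruence
`diag w * A * diag w`, so `xᵀ (1 - A1) x = ∑ (d i + 1) y i ^ 2 - yᵀ A y`. For a symmetric
nonnegative `A`, the termwise bound `2 y i y j ≤ y i ^ 2 + y j ^ 2` gives `yᵀ A y ≤ ∑ d i y i ^ 2`,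
leaving `xᵀ (1 - A1) x ≥ ‖y‖² > 0`.
-/

open Matrix Finset

section

variable {ι : Type*} [Fintype ι]

theorem dotProduct_diagonal_mul_mul_diagonal_mulVec {R : Type*} [CommSemiring R] [DecidableEq ι]
    (A : Matrix ι ι R) (w x : ι → R) :
    x ⬝ᵥ (diagonal w * A * diagonal w) *ᵥ x = (w * x) ⬝ᵥ A *ᵥ (w * x) := by
  have hmul : diagonal w *ᵥ x = w * x := funext (mulVec_diagonal w x)
  have hvec : x ᵥ* diagonal w = w * x :=
    funext fun i => (vecMul_diagonal x w i).trans (mul_comm _ _)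
  rw [← mulVec_mulVec, ← mulVec_mulVec, hmul, dotProduct_mulVec, hvec]

theorem dotProduct_mulVec_le_sum_rowSum_mul_sq {W : Matrix ι ι ℝ} (hW : W.IsSymm)
    (hW0 : ∀ i j, 0 ≤ W i j) (y : ι → ℝ) :
    y ⬝ᵥ W *ᵥ y ≤ ∑ i, (∑ j, W i j) * y i ^ 2 := by
  have hswap : ∑ i, ∑ j, W i j * y j ^ 2 = ∑ i, ∑ j, W i j * y i ^ 2 := by
    rw [Finset.sum_comm]
    simp_rw [hW.apply]
  have hamgm : ∀ i j, W i j * (y i * y j) ≤ (W i j * y i ^ 2 + W i j * y j ^ 2) / 2 :=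
    fun i j => by nlinarith [mul_nonneg (hW0 i j) (sq_nonneg (y i - y j))]
  calc y ⬝ᵥ W *ᵥ y = ∑ i, ∑ j, W i j * (y i * y j) := by
        simp only [dotProduct, mulVec, Finset.mul_sum]; congr! 2; ring
    _ ≤ ∑ i, ∑ j, (W i j * y i ^ 2 + W i j * y j ^ 2) / 2 :=
        sum_le_sum fun i _ => sum_le_sum fun j _ => hamgm i j
    _ = ∑ i, (∑ j, W i j) * y i ^ 2 := by
        simp only [← Finset.sum_div, Finset.sum_add_distrib, hswap, Finset.sum_mul]; ring

theorem eq_diagonal_mul_mul_diagonal_of_normalized [DecidableEq ι] {A A1 : Matrix ι ι ℝ}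
    (hdiag : ∀ i, A i i = 0) {d : ι → ℝ} (hd : ∀ i, 0 ≤ d i + 1)
    (hA1 : ∀ i j, A1 i j = if i = j then 0 else A i j / √((d i + 1) * (d j + 1))) :
    A1 = diagonal (fun i => (√(d i + 1))⁻¹) * A * diagonal (fun i => (√(d i + 1))⁻¹) := by
  ext i j
  rw [hA1, mul_diagonal, diagonal_mul]
  split_ifs with hij
  · simp [hij, hdiag]
  · rw [Real.sqrt_mul (hd i), div_eq_mul_inv, mul_inv]
    ring

end

/-- `I - A1` is positive definite, where `A1` is the off-diagonal
part of the symmetrically normalized adjacency matrix with added self-loops. -/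
theorem gtnet_one_sub_A1_posdef
    (N : ℕ) (A : Matrix (Fin N) (Fin N) ℝ)
    (hsymm : A.IsSymm)
    (h01 : ∀ i j, A i j = 0 ∨ A i j = 1)
    (hdiag : ∀ i, A i i = 0)
    (d : Fin N → ℝ) (hd : ∀ i, d i = ∑ j, A i j)
    (A1 : Matrix (Fin N) (Fin N) ℝ)
    (hA1 : ∀ i j, A1 i j =
      if i = j then 0 else A i j / Real.sqrt ((d i + 1) * (d j + 1))) :
    ∀ x : Fin N → ℝ, x ≠ 0 → 0 < x ⬝ᵥ (1 - A1) *ᵥ x := by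
  intro x hx
  have hA0 : ∀ i j, 0 ≤ A i j := fun i j => by rcases h01 i j with h | h <;> simp [h]
  have hd1 : ∀ i, 0 < d i + 1 := fun i => by
    have := sum_nonneg fun j (_ : j ∈ univ) => hA0 i j
    linarith [hd i]
  set w : Fin N → ℝ := fun i => (√(d i + 1))⁻¹
  set y := w * x
  have hy : y ≠ 0 := by
    obtain ⟨i, hi⟩ := Function.ne_iff.mp hx
    exact Function.ne_iff.mpr ⟨i, mul_ne_zero (inv_ne_zero (Real.sqrt_pos.2 (hd1 i)).ne') hi⟩
  have hnorm : x ⬝ᵥ x = ∑ i, (d i + 1) * y i ^ 2 := by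
    refine sum_congr rfl fun i _ => ?_
    have : w i ^ 2 * (d i + 1) = 1 := by
      simp only [w, inv_pow, Real.sq_sqrt (hd1 i).le]
      exact inv_mul_cancel₀ (hd1 i).ne'
    simp only [y, Pi.mul_apply]
    linear_combination (x i) ^ 2 * this.symm
  calc 0 < y ⬝ᵥ y := by simpa using dotProduct_star_self_pos_iff.mpr hy
    _ ≤ ∑ i, (d i + 1) * y i ^ 2 - y ⬝ᵥ A *ᵥ y := by
        have hAy := dotProduct_mulVec_le_sum_rowSum_mul_sq hsymm hA0 y
        simp only [← hd] at hAy
        simp only [add_mul, one_mul, sum_add_distrib, dotProduct, sq] at hAy ⊢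
        linarith
    _ = x ⬝ᵥ (1 - A1) *ᵥ x := by
        rw [sub_mulVec, one_mulVec, dotProduct_sub, hnorm,
          eq_diagonal_mul_mul_diagonal_of_normalized hdiag (fun i => (hd1 i).le) hA1,
          dotProduct_diagonal_mul_mul_diagonal_mulVec]
end

section
/- Let A be the adjacency matrix of a finite simple undirected graph on N vertices and let A1 be the off-diagonal part of the symmetrically normalized adjacency matrix with added self-loops. Then the matrix I + A1 is positive definite: for every nonzero vector x ∈ ℝ^N, x^T (I + A1) x > 0. -/
open Matrix Finset

/-- `I + A1` is positive definite, where `A1` is the off-diagonal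
part of the symmetrically normalized adjacency matrix with added self-loops. -/
theorem gtnet_one_add_A1_posdef
    (N : ℕ) (A : Matrix (Fin N) (Fin N) ℝ)
    (hsymm : A.IsSymm)
    (h01 : ∀ i j, A i j = 0 ∨ A i j = 1)
    (hdiag : ∀ i, A i i = 0)
    (d : Fin N → ℝ) (hd : ∀ i, d i = ∑ j, A i j)
    (A1 : Matrix (Fin N) (Fin N) ℝ)
    (hA1 : ∀ i j, A1 i j =
      if i = j then 0 else A i j / Real.sqrt ((d i + 1) * (d j + 1))) :
    ∀ x : Fin N → ℝ, x ≠ 0 → 0 < x ⬝ᵥ (1 + A1) *ᵥ x := by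
  intro x hx
  have hAnn : ∀ i j, 0 ≤ A i j := fun i j => by
    rcases h01 i j with h | h <;> simp [h]
  have hd0 : ∀ i, 0 ≤ d i := fun i => by
    rw [hd i]; exact Finset.sum_nonneg fun j _ => hAnn i j
  have hpos : ∀ i, (0:ℝ) < d i + 1 := fun i => by linarith [hd0 i]
  have hsq : ∀ i, 0 < Real.sqrt (d i + 1) := fun i => Real.sqrt_pos.2 (hpos i)
  set y : Fin N → ℝ := fun i => x i / Real.sqrt (d i + 1) with hy
  have hA1' : ∀ i j, A1 i j =
      A i j / (Real.sqrt (d i + 1) * Real.sqrt (d j + 1)) := by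
    intro i j
    rw [hA1 i j]
    split_ifs with h
    · subst h; simp [hdiag i]
    · rw [Real.sqrt_mul (le_of_lt (hpos i))]
  have hterm : ∀ i j, x i * (((if i = j then (1:ℝ) else 0) + A1 i j) * x j)
      = (if i = j then x i ^ 2 else 0) + A i j * y i * y j := by
    intro i j
    rw [hA1' i j]
    split_ifs with h
    · subst h; simp [hy, hdiag i]; ring
    · have hi := (hsq i).ne'
      have hj := (hsq j).ne'
      simp only [hy]
      field_simp
      ring
  have expand : x ⬝ᵥ (1 + A1) *ᵥ x
      = (∑ i, (x i) ^ 2) + ∑ i, ∑ j, A i j * y i * y j := by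
    simp only [dotProduct, mulVec, Matrix.add_apply, Matrix.one_apply]
    calc (∑ i, x i * ∑ j, ((if i = j then (1:ℝ) else 0) + A1 i j) * x j)
        = ∑ i, ∑ j, x i * (((if i = j then (1:ℝ) else 0) + A1 i j) * x j) := by
          simp [Finset.mul_sum]
      _ = ∑ i, ∑ j, ((if i = j then x i ^ 2 else 0) + A i j * y i * y j) := by
          simp_rw [hterm]
      _ = (∑ i, (x i) ^ 2) + ∑ i, ∑ j, A i j * y i * y j := by
          rw [← Finset.sum_add_distrib]
          congr 1
          funext i
          rw [Finset.sum_add_distrib, Finset.sum_ite_eq Finset.univ i (fun _ => x i ^ 2)]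
          simp
  have hx2 : ∀ i, (x i) ^ 2 = (d i + 1) * (y i) ^ 2 := by
    intro i
    have : x i = Real.sqrt (d i + 1) * y i := by
      simp only [hy]
      rw [mul_comm, div_mul_cancel₀ _ (hsq i).ne']
    rw [this, mul_pow, Real.sq_sqrt (le_of_lt (hpos i))]
  have hswap : (∑ i, ∑ j, A i j * y j ^ 2) = ∑ i, ∑ j, A i j * y i ^ 2 := by
    rw [Finset.sum_comm]
    refine Finset.sum_congr rfl fun j _ => Finset.sum_congr rfl fun i _ => ?_
    have : A i j = A j i := by
      have := congrFun (congrFun hsymm j) i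
      simpa [Matrix.transpose_apply] using this
    rw [this]
  have key : x ⬝ᵥ (1 + A1) *ᵥ x
      = (∑ i, (y i) ^ 2) + ∑ i, ∑ j, A i j * ((y i + y j) ^ 2 / 2) := by
    rw [expand]
    have hdsum : (∑ i, (x i) ^ 2)
        = (∑ i, (y i) ^ 2) + ∑ i, ∑ j, A i j * y i ^ 2 := by
      calc (∑ i, (x i) ^ 2) = ∑ i, ((y i) ^ 2 + d i * y i ^ 2) := by
            refine Finset.sum_congr rfl fun i _ => ?_
            rw [hx2 i]; ring
        _ = (∑ i, (y i) ^ 2) + ∑ i, d i * y i ^ 2 := Finset.sum_add_distrib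
        _ = (∑ i, (y i) ^ 2) + ∑ i, ∑ j, A i j * y i ^ 2 := by
            congr 1
            refine Finset.sum_congr rfl fun i _ => ?_
            rw [hd i, Finset.sum_mul]
    rw [hdsum, add_assoc]
    congr 1
    have : (∑ i, ∑ j, A i j * ((y i + y j) ^ 2 / 2))
        = (∑ i, ∑ j, (A i j * y i ^ 2 / 2 + A i j * y j ^ 2 / 2 + A i j * y i * y j)) := by
      refine Finset.sum_congr rfl fun i _ => Finset.sum_congr rfl fun j _ => by ring
    rw [this]
    simp only [Finset.sum_add_distrib]
    have h1 : (∑ i, ∑ j, A i j * y i ^ 2 / 2) = (∑ i, ∑ j, A i j * y i ^ 2) / 2 := by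
      simp [Finset.sum_div]
    have h2 : (∑ i, ∑ j, A i j * y j ^ 2 / 2) = (∑ i, ∑ j, A i j * y i ^ 2) / 2 := by
      rw [← hswap]; simp [Finset.sum_div]
    rw [h1, h2]
    ring
  rw [key]
  have hnn : 0 ≤ ∑ i, ∑ j, A i j * ((y i + y j) ^ 2 / 2) :=
    Finset.sum_nonneg fun i _ => Finset.sum_nonneg fun j _ =>
      mul_nonneg (hAnn i j) (by positivity)
  have hypos : 0 < ∑ i, (y i) ^ 2 := by
    obtain ⟨i, hi⟩ := Function.ne_iff.1 hx
    have hyi : y i ≠ 0 := by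
      simp only [hy]
      exact div_ne_zero (by simpa using hi) (hsq i).ne'
    refine Finset.sum_pos' (fun j _ => sq_nonneg _) ⟨i, Finset.mem_univ i, ?_⟩
    positivity
  linarith
end

section
/- (Lemma 2) Let A be the adjacency matrix of a finite simple undirected graph on N vertices and let A1 be the off-diagonal part of the symmetrically normalized adjacency matrix with added self-loops. Then every real eigenvalue a of A1 (i.e. every a ∈ ℝ for which there exists a nonzero x ∈ ℝ^N with A1 x = a x) satisfies −1 < a < 1. -/
open Matrix Finset

/-!
With `s i = √(d i + 1)` and `y = x / s`, an eigenvector `x` of `D̃^{-1/2} A D̃^{-1/2}` for `a` gives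
`a · ∑ (d i + 1) y i² = yᵀ A y`. For a nonnegative symmetric `A`, the inequality
`2 |y i y j| ≤ y i² + y j²` bounds `|yᵀ A y|` by `∑ d i y i²`, which falls short of
`∑ (d i + 1) y i²` by `∑ y i² > 0`; hence `|a| < 1`.
-/

variable {ι : Type*} [Fintype ι]

/-- `D̃^{-1/2} A D̃^{-1/2}` with `D̃ = diag (d + 1)`, `d` the row sums of `A`; for `A` with zero
diagonal this is the off-diagonal part of the normalized adjacency matrix with self-loops. -/
noncomputable def Matrix.selfLoopNormalized (A : Matrix ι ι ℝ) : Matrix ι ι ℝ :=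
  of fun i j => A i j / √((∑ k, A i k + 1) * (∑ k, A j k + 1))

theorem Matrix.IsSymm.abs_quadForm_le_sum_rowSum_mul_sq {A : Matrix ι ι ℝ} (hA : A.IsSymm)
    (hA0 : ∀ i j, 0 ≤ A i j) (y : ι → ℝ) :
    |∑ i, ∑ j, A i j * y i * y j| ≤ ∑ i, (∑ j, A i j) * y i ^ 2 := by
  have hterm : ∀ i j, |A i j * y i * y j| ≤ A i j * (y i ^ 2 + y j ^ 2) / 2 := by
    intro i j
    have h := two_mul_le_add_sq |y i| |y j|
    rw [sq_abs, sq_abs] at h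
    rw [mul_assoc, abs_mul, abs_of_nonneg (hA0 i j), abs_mul, mul_div_assoc]
    exact mul_le_mul_of_nonneg_left (by linarith) (hA0 i j)
  have hswap : ∑ i, ∑ j, A i j * y j ^ 2 = ∑ i, ∑ j, A i j * y i ^ 2 := by
    rw [sum_comm]
    simp only [hA.apply]
  calc |∑ i, ∑ j, A i j * y i * y j|
      ≤ ∑ i, ∑ j, |A i j * y i * y j| :=
        (abs_sum_le_sum_abs _ _).trans (sum_le_sum fun i _ => abs_sum_le_sum_abs _ _)
    _ ≤ ∑ i, ∑ j, A i j * (y i ^ 2 + y j ^ 2) / 2 := by gcongr with i _ j _; exact hterm i j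
    _ = (∑ i, ∑ j, A i j * y i ^ 2 + ∑ i, ∑ j, A i j * y j ^ 2) / 2 := by
        simp only [mul_add, add_div, sum_add_distrib, sum_div]
    _ = ∑ i, (∑ j, A i j) * y i ^ 2 := by
        rw [hswap, add_self_div_two]
        simp only [sum_mul]

theorem Matrix.IsSymm.abs_lt_one_of_selfLoopNormalized_mulVec_eq_smul {A : Matrix ι ι ℝ}
    (hA : A.IsSymm) (hA0 : ∀ i j, 0 ≤ A i j) {a : ℝ} {x : ι → ℝ} (hx : x ≠ 0)
    (hax : A.selfLoopNormalized *ᵥ x = a • x) : |a| < 1 := by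
  set d : ι → ℝ := fun i => ∑ k, A i k
  have hd0 : ∀ i, 0 ≤ d i := fun i => sum_nonneg fun k _ => hA0 i k
  set s : ι → ℝ := fun i => √(d i + 1)
  have hs0 : ∀ i, s i ≠ 0 := fun i => (Real.sqrt_pos.mpr (by linarith [hd0 i])).ne'
  have hs_sq : ∀ i, s i ^ 2 = d i + 1 := fun i => Real.sq_sqrt (by linarith [hd0 i])
  set y : ι → ℝ := fun i => x i / s i
  have hnorm : ∑ i, x i ^ 2 = ∑ i, d i * y i ^ 2 + ∑ i, y i ^ 2 := by
    rw [← sum_add_distrib]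
    refine sum_congr rfl fun i _ => ?_
    simp only [y, div_pow, ← add_one_mul, ← hs_sq i]
    field_simp [hs0 i]
  have hquad : a * ∑ i, x i ^ 2 = ∑ i, ∑ j, A i j * y i * y j := by
    calc a * ∑ i, x i ^ 2 = x ⬝ᵥ (a • x) := by
          simp only [dotProduct, mul_sum, Pi.smul_apply, smul_eq_mul]
          exact sum_congr rfl fun i _ => by ring
      _ = ∑ i, ∑ j, A i j * y i * y j := by
          rw [← hax]
          simp only [dotProduct, mulVec, selfLoopNormalized, of_apply, mul_sum]
          refine sum_congr rfl fun i _ => sum_congr rfl fun j _ => ?_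
          rw [Real.sqrt_mul (by linarith [hd0 i])]
          ring
  have hy : 0 < ∑ i, y i ^ 2 := by
    obtain ⟨i, hi⟩ := Function.ne_iff.mp hx
    have hyi : y i ≠ 0 := div_ne_zero hi (hs0 i)
    exact sum_pos' (fun j _ => sq_nonneg (y j)) ⟨i, mem_univ i, by positivity⟩
  have hdy : 0 ≤ ∑ i, d i * y i ^ 2 := sum_nonneg fun i _ => mul_nonneg (hd0 i) (sq_nonneg _)
  have hbound : |a| * ∑ i, x i ^ 2 ≤ ∑ i, d i * y i ^ 2 := by
    calc |a| * ∑ i, x i ^ 2 = |∑ i, ∑ j, A i j * y i * y j| := by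
          rw [← hquad, abs_mul, abs_of_nonneg (by positivity : 0 ≤ ∑ i, x i ^ 2)]
      _ ≤ ∑ i, d i * y i ^ 2 := hA.abs_quadForm_le_sum_rowSum_mul_sq hA0 y
  rw [hnorm] at hbound
  by_contra! h
  nlinarith

/-- Lemma 2: Every real eigenvalue `a` of `A1` satisfies
`-1 < a < 1`, where `A1` is the off-diagonal part of the symmetrically
normalized adjacency matrix with added self-loops. -/
theorem gtnet_A1_eigenvalue_bounds
    (N : ℕ) (A : Matrix (Fin N) (Fin N) ℝ)
    (hsymm : A.IsSymm)
    (h01 : ∀ i j, A i j = 0 ∨ A i j = 1)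
    (hdiag : ∀ i, A i i = 0)
    (d : Fin N → ℝ) (hd : ∀ i, d i = ∑ j, A i j)
    (A1 : Matrix (Fin N) (Fin N) ℝ)
    (hA1 : ∀ i j, A1 i j =
      if i = j then 0 else A i j / Real.sqrt ((d i + 1) * (d j + 1))) :
    ∀ (a : ℝ) (x : Fin N → ℝ), x ≠ 0 → A1 *ᵥ x = a • x → -1 < a ∧ a < 1 := by
  intro a x hx hax
  have hA0 : ∀ i j, 0 ≤ A i j := fun i j => (h01 i j).elim (·.ge) fun h => h ▸ zero_le_one
  have hA1_eq : A1 = A.selfLoopNormalized := by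
    ext i j
    rw [hA1, selfLoopNormalized, of_apply, ← hd, ← hd]
    split_ifs with hij
    · simp [hij, hdiag]
    · rfl
  exact abs_lt.mp (hsymm.abs_lt_one_of_selfLoopNormalized_mulVec_eq_smul hA0 hx (hA1_eq ▸ hax))
end

section
/- (Lemma 3) Let A be the adjacency matrix of a finite simple undirected graph on N vertices and let A1 be the off-diagonal part of the symmetrically normalized adjacency matrix with added self-loops. Then every real eigenvalue λ of the matrix I − A1 (i.e. every λ ∈ ℝ for which there exists a nonzero x ∈ ℝ^N with (I − A1) x = λ x) satisfies 0 < λ < 2. -/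
/-!
Write `x = D^{1/2} y` with `D = diag (d + 1)`. Then `x ⬝ᵥ A1 x = y ⬝ᵥ A y` (the diagonal of `A`
vanishes) and `x ⬝ᵥ x = y ⬝ᵥ y + ∑ d_i y_i²`. Bounding `2 |y_i y_j| ≤ y_i² + y_j²` termwise
and using the symmetry of `A` gives `|y ⬝ᵥ A y| ≤ ∑ d_i y_i² < x ⬝ᵥ x`, so the Rayleigh
quotient `1 - λ = x ⬝ᵥ A1 x / x ⬝ᵥ x` lies strictly between `-1` and `1`.
-/

open Matrix Finset

variable {n : Type*} [Fintype n]

lemma abs_mul_le_half_add_sq (a b : ℝ) : |a * b| ≤ (a ^ 2 + b ^ 2) / 2 := by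
  rw [abs_le]
  constructor <;> nlinarith [sq_nonneg (a + b), sq_nonneg (a - b)]

lemma dotProduct_mulVec_eq_sum_sum (W : Matrix n n ℝ) (y : n → ℝ) :
    y ⬝ᵥ W *ᵥ y = ∑ i, ∑ j, W i j * (y i * y j) := by
  simp only [dotProduct, mulVec, mul_sum]
  exact sum_congr rfl fun i _ => sum_congr rfl fun j _ => by ring

lemma sum_sum_mul_sq_right_of_isSymm {W : Matrix n n ℝ} (hW : W.IsSymm) (y : n → ℝ) :
    ∑ i, ∑ j, W i j * y j ^ 2 = ∑ i, ∑ j, W i j * y i ^ 2 := by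
  rw [sum_comm]
  exact sum_congr rfl fun i _ => sum_congr rfl fun j _ => by rw [hW.apply i j]

lemma abs_dotProduct_mulVec_le_of_isSymm_of_nonneg {W : Matrix n n ℝ} (hW : W.IsSymm)
    (hW0 : ∀ i j, 0 ≤ W i j) (y : n → ℝ) :
    |y ⬝ᵥ W *ᵥ y| ≤ ∑ i, (∑ j, W i j) * y i ^ 2 := by
  rw [dotProduct_mulVec_eq_sum_sum]
  calc |∑ i, ∑ j, W i j * (y i * y j)|
      ≤ ∑ i, ∑ j, W i j * ((y i ^ 2 + y j ^ 2) / 2) := by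
        refine (abs_sum_le_sum_abs _ _).trans (sum_le_sum fun i _ => ?_)
        refine (abs_sum_le_sum_abs _ _).trans (sum_le_sum fun j _ => ?_)
        rw [abs_mul, abs_of_nonneg (hW0 i j)]
        exact mul_le_mul_of_nonneg_left (abs_mul_le_half_add_sq _ _) (hW0 i j)
    _ = (∑ i, ∑ j, W i j * y i ^ 2 + ∑ i, ∑ j, W i j * y j ^ 2) / 2 := by
        simp only [mul_add, add_div, mul_div_assoc', sum_add_distrib, sum_div]
    _ = ∑ i, (∑ j, W i j) * y i ^ 2 := by
        rw [sum_sum_mul_sq_right_of_isSymm hW, add_self_div_two]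
        simp only [sum_mul]

lemma eigenvalue_one_sub_mem_Ioo [DecidableEq n] {B : Matrix n n ℝ} {x : n → ℝ} {lam : ℝ}
    (hev : (1 - B) *ᵥ x = lam • x) (hB : |x ⬝ᵥ B *ᵥ x| < x ⬝ᵥ x) :
    0 < lam ∧ lam < 2 := by
  have hpos : 0 < x ⬝ᵥ x := (abs_nonneg _).trans_lt hB
  have hquad : lam * (x ⬝ᵥ x) = x ⬝ᵥ x - x ⬝ᵥ B *ᵥ x := by
    rw [← smul_eq_mul, ← dotProduct_smul, ← hev, sub_mulVec, one_mulVec, dotProduct_sub]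
  obtain ⟨hlow, hup⟩ := abs_lt.mp hB
  constructor
  · exact pos_of_mul_pos_left (by linarith) hpos.le
  · nlinarith

lemma dotProduct_mulVec_of_apply_eq_div {B W : Matrix n n ℝ} {s : n → ℝ} (hs : ∀ i, s i ≠ 0)
    (hB : ∀ i j, B i j = W i j / (s i * s j)) (x : n → ℝ) :
    x ⬝ᵥ B *ᵥ x = (x / s) ⬝ᵥ W *ᵥ (x / s) := by
  simp only [dotProduct_mulVec_eq_sum_sum, hB, Pi.div_apply]
  refine sum_congr rfl fun i _ => sum_congr rfl fun j _ => ?_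
  field_simp [hs i, hs j]

/-- Lemma 3: Every real eigenvalue `λ` of `I - A1` satisfies
`0 < λ < 2`, where `A1` is the off-diagonal part of the symmetrically
normalized adjacency matrix with added self-loops. -/
theorem gtnet_one_sub_A1_eigenvalue_bounds
    (N : ℕ) (A : Matrix (Fin N) (Fin N) ℝ)
    (hsymm : A.IsSymm)
    (h01 : ∀ i j, A i j = 0 ∨ A i j = 1)
    (hdiag : ∀ i, A i i = 0)
    (d : Fin N → ℝ) (hd : ∀ i, d i = ∑ j, A i j)
    (A1 : Matrix (Fin N) (Fin N) ℝ)
    (hA1 : ∀ i j, A1 i j =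
      if i = j then 0 else A i j / Real.sqrt ((d i + 1) * (d j + 1))) :
    ∀ (lam : ℝ) (x : Fin N → ℝ), x ≠ 0 → (1 - A1) *ᵥ x = lam • x →
      0 < lam ∧ lam < 2 := by
  intro lam x hx hev
  have hA0 : ∀ i j, 0 ≤ A i j := fun i j => by rcases h01 i j with h | h <;> simp [h]
  have hd0 : ∀ i, 0 ≤ d i := fun i => hd i ▸ sum_nonneg fun j _ => hA0 i j
  set s : Fin N → ℝ := fun i => √(d i + 1)
  have hs : ∀ i, s i ≠ 0 := fun i => (Real.sqrt_pos.2 (by linarith [hd0 i])).ne'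
  have hA1s : ∀ i j, A1 i j = A i j / (s i * s j) := by
    intro i j
    rw [hA1]
    split_ifs with h
    · simp [h, hdiag]
    · rw [Real.sqrt_mul (by linarith [hd0 i])]
  set y := x / s
  have hxx : x ⬝ᵥ x = y ⬝ᵥ y + ∑ i, d i * y i ^ 2 := by
    simp only [dotProduct, ← sum_add_distrib]
    refine sum_congr rfl fun i _ => ?_
    have hsq : s i ^ 2 = d i + 1 := Real.sq_sqrt (by linarith [hd0 i])
    simp only [y, Pi.div_apply]
    field_simp [hs i]
    rw [hsq]
    ring
  have hy : 0 < y ⬝ᵥ y := by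
    refine (dotProduct_self_star_nonneg y).lt_of_ne' ?_
    rw [star_trivial, Ne, dotProduct_self_eq_zero]
    exact fun hy0 => hx (funext fun i => by simpa [y, hs i] using congrFun hy0 i)
  refine eigenvalue_one_sub_mem_Ioo hev ?_
  rw [dotProduct_mulVec_of_apply_eq_div hs hA1s, hxx]
  calc |y ⬝ᵥ A *ᵥ y| ≤ ∑ i, d i * y i ^ 2 := by
        simpa only [← hd] using abs_dotProduct_mulVec_le_of_isSymm_of_nonneg hsymm hA0 y
    _ < y ⬝ᵥ y + ∑ i, d i * y i ^ 2 := lt_add_of_pos_left _ hy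
end

section
/- Let A be the adjacency matrix of a finite simple undirected graph on N vertices and let A1 be the off-diagonal part of the symmetrically normalized adjacency matrix with added self-loops. Then the powers of A1 converge to the zero matrix: lim_{L → ∞} A1^L = 0 (entrywise). -/
open Matrix Finset Filter

/-!
The vector `s i = √(d i + 1)` is a positive weight for which every weighted absolute row sum of
`A1` satisfies `∑ k, |A1 i k| s k ≤ d i / (d i + 1) · s i`, and `d i / (d i + 1)` is bounded away
from `1` uniformly in `i`. A weighted row-sum bound with rate `r < 1` propagates to
`|(A1 ^ L) i j| s j ≤ r ^ L s i`, which forces `A1 ^ L → 0`.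
-/

namespace Matrix

variable {n : Type*} [Fintype n] [DecidableEq n]

theorem abs_pow_apply_mul_le_of_weighted_row_sum_le {M : Matrix n n ℝ} {s : n → ℝ} {r : ℝ}
    (hr : 0 ≤ r) (hs : ∀ i, 0 ≤ s i) (hrow : ∀ i, ∑ k, |M i k| * s k ≤ r * s i) (L : ℕ) :
    ∀ i j, |(M ^ L) i j| * s j ≤ r ^ L * s i := by
  induction L with
  | zero =>
    intro i j
    rcases eq_or_ne i j with rfl | hij
    · simp
    · simpa [one_apply_ne hij] using hs i
  | succ L ih =>
    intro i j
    rw [pow_succ', mul_apply]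
    calc |∑ k, M i k * (M ^ L) k j| * s j
        ≤ (∑ k, |M i k * (M ^ L) k j|) * s j :=
          mul_le_mul_of_nonneg_right (abs_sum_le_sum_abs _ _) (hs j)
      _ = ∑ k, |M i k| * (|(M ^ L) k j| * s j) := by
          rw [sum_mul]; congr! 1 with k; rw [abs_mul, mul_assoc]
      _ ≤ ∑ k, |M i k| * (r ^ L * s k) :=
          sum_le_sum fun k _ => mul_le_mul_of_nonneg_left (ih k j) (abs_nonneg _)
      _ = r ^ L * ∑ k, |M i k| * s k := by rw [mul_sum]; congr! 1 with k; ring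
      _ ≤ r ^ L * (r * s i) := by gcongr; exact hrow i
      _ = r ^ (L + 1) * s i := by ring

theorem tendsto_pow_nhds_zero_of_weighted_row_sum_le {M : Matrix n n ℝ} {s : n → ℝ} {r : ℝ}
    (hr₀ : 0 ≤ r) (hr₁ : r < 1) (hs : ∀ i, 0 < s i)
    (hrow : ∀ i, ∑ k, |M i k| * s k ≤ r * s i) :
    Tendsto (fun L : ℕ => M ^ L) atTop (nhds 0) := by
  refine tendsto_pi_nhds.2 fun i => tendsto_pi_nhds.2 fun j => ?_
  have hbound : Tendsto (fun L : ℕ => r ^ L * s i / s j) atTop (nhds 0) := by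
    simpa using ((tendsto_pow_atTop_nhds_zero_of_lt_one hr₀ hr₁).mul_const (s i)).div_const (s j)
  refine squeeze_zero_norm (fun L => ?_) hbound
  rw [Real.norm_eq_abs, le_div_iff₀ (hs j)]
  exact abs_pow_apply_mul_le_of_weighted_row_sum_le hr₀ (fun k => (hs k).le) hrow L i j

end Matrix

theorem sum_abs_offDiag_normalized_mul_sqrt_le {n : Type*} [Fintype n] [DecidableEq n]
    {A A1 : Matrix n n ℝ} {d : n → ℝ} (hA : ∀ i j, 0 ≤ A i j) (hd : ∀ i, d i = ∑ j, A i j)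
    (hA1 : ∀ i j, A1 i j = if i = j then 0 else A i j / Real.sqrt ((d i + 1) * (d j + 1)))
    (i : n) : ∑ k, |A1 i k| * Real.sqrt (d k + 1) ≤ d i / (d i + 1) * Real.sqrt (d i + 1) := by
  have hd₀ : ∀ k, 0 ≤ d k := fun k => hd k ▸ sum_nonneg fun j _ => hA k j
  have hsqrt : ∀ k, 0 < Real.sqrt (d k + 1) := fun k => Real.sqrt_pos.2 (by linarith [hd₀ k])
  have hterm : ∀ k, |A1 i k| * Real.sqrt (d k + 1) ≤ A i k / Real.sqrt (d i + 1) := by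
    intro k
    rw [hA1]
    split_ifs
    · simpa using div_nonneg (hA i k) (hsqrt i).le
    · rw [Real.sqrt_mul (by linarith [hd₀ i]), abs_of_nonneg (div_nonneg (hA i k) (by positivity)),
        div_mul_eq_mul_div, mul_div_mul_right _ _ (hsqrt k).ne']
  calc ∑ k, |A1 i k| * Real.sqrt (d k + 1) ≤ ∑ k, A i k / Real.sqrt (d i + 1) :=
        sum_le_sum fun k _ => hterm k
    _ = d i / (d i + 1) * Real.sqrt (d i + 1) := by
        rw [← sum_div, ← hd, div_mul_eq_mul_div, div_eq_div_iff (hsqrt i).ne' (by linarith [hd₀ i]),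
          mul_assoc, Real.mul_self_sqrt (by linarith [hd₀ i])]

theorem gtnet_A1_pow_tendsto_zero_general
    (N : ℕ) (A : Matrix (Fin N) (Fin N) ℝ)
    (h01 : ∀ i j, A i j = 0 ∨ A i j = 1)
    (d : Fin N → ℝ) (hd : ∀ i, d i = ∑ j, A i j)
    (A1 : Matrix (Fin N) (Fin N) ℝ)
    (hA1 : ∀ i j, A1 i j =
      if i = j then 0 else A i j / Real.sqrt ((d i + 1) * (d j + 1))) :
    Tendsto (fun L : ℕ => A1 ^ L) atTop (nhds 0) := by
  have hA : ∀ i j, 0 ≤ A i j := fun i j => by rcases h01 i j with h | h <;> simp [h]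
  have hd₀ : ∀ i, 0 ≤ d i := fun i => hd i ▸ sum_nonneg fun j _ => hA i j
  set D := ∑ i, d i
  have hD : 0 ≤ D := sum_nonneg fun i _ => hd₀ i
  -- `d i ≤ D` makes `D / (D + 1) < 1` a rate valid for every row.
  refine tendsto_pow_nhds_zero_of_weighted_row_sum_le (s := fun i => Real.sqrt (d i + 1))
    (by positivity) ((div_lt_one (by positivity)).2 (lt_add_one D))
    (fun i => Real.sqrt_pos.2 (by linarith [hd₀ i])) fun i => ?_
  calc ∑ k, |A1 i k| * Real.sqrt (d k + 1) ≤ d i / (d i + 1) * Real.sqrt (d i + 1) :=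
        sum_abs_offDiag_normalized_mul_sqrt_le hA hd hA1 i
    _ ≤ D / (D + 1) * Real.sqrt (d i + 1) := by
        have hdD : d i ≤ D := single_le_sum (fun j _ => hd₀ j) (mem_univ i)
        gcongr ?_ * _
        rw [div_le_div_iff₀ (by linarith [hd₀ i]) (by positivity)]
        linarith

/-- The powers of `A1` converge (entrywise) to the zero matrix,
where `A1` is the off-diagonal part of the symmetrically normalized adjacency
matrix with added self-loops. -/
theorem gtnet_A1_pow_tendsto_zero
    (N : ℕ) (A : Matrix (Fin N) (Fin N) ℝ)
    (hsymm : A.IsSymm)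
    (h01 : ∀ i j, A i j = 0 ∨ A i j = 1)
    (hdiag : ∀ i, A i i = 0)
    (d : Fin N → ℝ) (hd : ∀ i, d i = ∑ j, A i j)
    (A1 : Matrix (Fin N) (Fin N) ℝ)
    (hA1 : ∀ i j, A1 i j =
      if i = j then 0 else A i j / Real.sqrt ((d i + 1) * (d j + 1))) :
    Tendsto (fun L : ℕ => A1 ^ L) atTop (nhds 0) :=
  gtnet_A1_pow_tendsto_zero_general N A h01 d hd A1 hA1
end

section
/- Let A be the adjacency matrix of a finite simple undirected graph on N vertices and let A1 be the off-diagonal part of the symmetrically normalized adjacency matrix with added self-loops. Then the matrix I − A1 is invertible. -/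
/-!
With `D = diag(d + 1)` and the Laplacian `L = diag(d) - A`, the zero diagonal of `A` gives
`1 - A1 = D^{-1/2} (L + 1) D^{-1/2}`. For a symmetric `A` with nonnegative entries,
`2 xᵀ L x = ∑ i j, A i j (x i - x j)²`, so `L` is positive semidefinite, `L + 1` is positive
definite, and so is its congruent `1 - A1`.
-/

open Matrix Finset

namespace Matrix

variable {n : Type*} [Fintype n] [DecidableEq n]

theorem two_mul_dotProduct_diagonal_rowSum_sub_mulVec {R : Type*} [CommRing R]
    {A : Matrix n n R} (hA : A.IsSymm) (x : n → R) :
    2 * (x ⬝ᵥ (((diagonal fun i ↦ ∑ j, A i j) - A) *ᵥ x)) =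
      ∑ i, ∑ j, A i j * (x i - x j) ^ 2 := by
  have hform : x ⬝ᵥ (((diagonal fun i ↦ ∑ j, A i j) - A) *ᵥ x) =
      ∑ i, ∑ j, (A i j * x i ^ 2 - x i * (A i j * x j)) := by
    rw [sub_mulVec, dotProduct_sub]
    simp only [dotProduct, mulVec_diagonal]
    simp only [mulVec, dotProduct, Finset.sum_mul, Finset.mul_sum, ← Finset.sum_sub_distrib]
    exact Finset.sum_congr rfl fun i _ ↦ Finset.sum_congr rfl fun j _ ↦ by ring
  have hswap : ∑ i, ∑ j, A i j * x j ^ 2 = ∑ i, ∑ j, A i j * x i ^ 2 := by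
    rw [Finset.sum_comm]
    exact Finset.sum_congr rfl fun i _ ↦ Finset.sum_congr rfl fun j _ ↦ by rw [hA.apply i j]
  have hexpand : ∑ i, ∑ j, A i j * (x i - x j) ^ 2 =
      ∑ i, ∑ j, (A i j * x i ^ 2 - 2 * (x i * (A i j * x j))) + ∑ i, ∑ j, A i j * x j ^ 2 := by
    simp only [← Finset.sum_add_distrib]
    exact Finset.sum_congr rfl fun i _ ↦ Finset.sum_congr rfl fun j _ ↦ by ring
  rw [hform, hexpand, hswap, ← Finset.sum_add_distrib, Finset.mul_sum]
  refine Finset.sum_congr rfl fun i _ ↦ ?_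
  rw [Finset.mul_sum, ← Finset.sum_add_distrib]
  exact Finset.sum_congr rfl fun j _ ↦ by ring

theorem posSemidef_diagonal_rowSum_sub {R : Type*} [CommRing R] [LinearOrder R]
    [IsStrictOrderedRing R] [StarRing R] [TrivialStar R] {A : Matrix n n R} (hA : A.IsSymm)
    (hA₀ : ∀ i j, 0 ≤ A i j) :
    ((diagonal fun i ↦ ∑ j, A i j) - A).PosSemidef := by
  refine .of_dotProduct_mulVec_nonneg ?_ fun x ↦ ?_
  · rw [IsHermitian, conjTranspose_eq_transpose_of_trivial, transpose_sub, diagonal_transpose,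
      hA.eq]
  · rw [star_trivial, ← mul_nonneg_iff_of_pos_left (two_pos : (0 : R) < 2),
      two_mul_dotProduct_diagonal_rowSum_sub_mulVec hA]
    exact Finset.sum_nonneg fun i _ ↦ Finset.sum_nonneg fun j _ ↦
      mul_nonneg (hA₀ i j) (sq_nonneg _)

theorem one_sub_eq_star_mul_diagonal_sub_mul {A B : Matrix n n ℝ} {c : n → ℝ}
    (hc : ∀ i, 0 < c i) (hdiag : ∀ i, A i i = 0)
    (hB : ∀ i j, B i j = if i = j then 0 else A i j / √(c i * c j)) :
    1 - B = star (diagonal fun i ↦ (√(c i))⁻¹) * (diagonal c - A) *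
      diagonal fun i ↦ (√(c i))⁻¹ := by
  ext i j
  simp only [star_eq_conjTranspose, diagonal_conjTranspose, star_trivial, diagonal_mul,
    mul_diagonal, Matrix.sub_apply, one_apply, diagonal_apply, hB]
  rcases eq_or_ne i j with rfl | hij
  · have hsqrt : √(c i) ≠ 0 := (Real.sqrt_pos.2 (hc i)).ne'
    simp only [if_true, hdiag, sub_zero]
    field_simp
    exact Real.sq_sqrt (hc i).le
  · simp only [hij, if_false, zero_sub, mul_neg, neg_mul, neg_inj]
    rw [Real.sqrt_mul (hc i).le, div_eq_mul_inv, mul_inv]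
    ring

end Matrix

/-- The matrix `I - A1` is invertible, where `A1` is the
off-diagonal part of the symmetrically normalized adjacency matrix with added
self-loops. -/
theorem gtnet_one_sub_A1_invertible
    (N : ℕ) (A : Matrix (Fin N) (Fin N) ℝ)
    (hsymm : A.IsSymm)
    (h01 : ∀ i j, A i j = 0 ∨ A i j = 1)
    (hdiag : ∀ i, A i i = 0)
    (d : Fin N → ℝ) (hd : ∀ i, d i = ∑ j, A i j)
    (A1 : Matrix (Fin N) (Fin N) ℝ)
    (hA1 : ∀ i j, A1 i j =
      if i = j then 0 else A i j / Real.sqrt ((d i + 1) * (d j + 1))) :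
    IsUnit (1 - A1) := by
  have hA₀ : ∀ i j, 0 ≤ A i j := fun i j ↦ by rcases h01 i j with h | h <;> simp [h]
  have hd₀ : ∀ i, 0 < d i + 1 := fun i ↦ by
    rw [hd]; linarith [Finset.sum_nonneg fun j (_ : j ∈ univ) ↦ hA₀ i j]
  have hD : IsUnit (diagonal fun i ↦ (√(d i + 1))⁻¹) :=
    isUnit_diagonal.2 <| Pi.isUnit_iff.2 fun i ↦
      (inv_pos.2 <| Real.sqrt_pos.2 (hd₀ i)).ne'.isUnit
  have hM : (diagonal (fun i ↦ d i + 1) - A).PosDef := by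
    rw [← diagonal_add (d₂ := fun _ ↦ 1), diagonal_one, add_sub_right_comm, funext hd]
    exact .posSemidef_add (posSemidef_diagonal_rowSum_sub hsymm hA₀) .one
  rw [one_sub_eq_star_mul_diagonal_sub_mul hd₀ hdiag hA1]
  exact (hD.posDef_star_left_conjugate_iff.2 hM).isUnit
end

section
/- (Theorem 1) Let A be the adjacency matrix of a finite simple undirected graph on N vertices, let A1 and A2 be the off-diagonal and diagonal parts of the symmetrically normalized adjacency matrix with added self-loops, and let Z be any real N×F matrix. Define the GTCN propagation by H(0) = Z and H(m+1) = A1 · H(m) + A2 · Z. Then as the number of propagation layers L tends to infinity, the node representation converges (entrywise) to the limit lim_{L → ∞} H(L) = (I − A1)⁻¹ · A2 · Z. -/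
/-!
`A1 = D^{-1/2} A' D^{-1/2}`, where `A'` is `A` with its diagonal removed and `D = diag (d + 1)`,
is similar to the random-walk matrix `D⁻¹ A'`, whose rows are nonnegative and sum to
`d i / (d i + 1) < 1`. So `D⁻¹ A'` has `ℓ^∞` operator norm `< 1`, its geometric series converges,
and hence so does that of `A1`. Unrolling the recurrence gives
`H L = A1 ^ L * H 0 + (∑ k < L, A1 ^ k) * A2 * Z`, which tends to `(∑' k, A1 ^ k) * A2 * Z`,
and `∑' k, A1 ^ k = (I - A1)⁻¹`.
-/

open Matrix Finset Filter Topology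

section AffineRecurrence

variable {m n α : Type*} [Fintype m] [DecidableEq m] [Ring α]

theorem Matrix.affine_iterate_eq {a : Matrix m m α} {c : Matrix m n α} {x : ℕ → Matrix m n α}
    (hx : ∀ k, x (k + 1) = a * x k + c) (k : ℕ) :
    x k = a ^ k * x 0 + (∑ i ∈ range k, a ^ i) * c := by
  induction k with
  | zero => simp
  | succ k ih =>
    rw [hx, ih, geom_sum_succ, pow_succ', Matrix.mul_add, Matrix.add_mul, Matrix.mul_assoc,
      Matrix.mul_assoc, Matrix.one_mul, add_assoc]

theorem Matrix.tendsto_affine_iterate [TopologicalSpace α] [IsTopologicalRing α]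
    {a : Matrix m m α} {c : Matrix m n α} {x : ℕ → Matrix m n α} (ha : Summable (a ^ ·))
    (hx : ∀ k, x (k + 1) = a * x k + c) :
    Tendsto x atTop (𝓝 ((∑' k, a ^ k) * c)) := by
  have hpow : Tendsto (fun k => a ^ k * x 0) atTop (𝓝 ((0 : Matrix m m α) * x 0)) :=
    ((continuous_id.matrix_mul continuous_const).tendsto _).comp ha.tendsto_atTop_zero
  have hgeom : Tendsto (fun k => (∑ i ∈ range k, a ^ i) * c) atTop (𝓝 ((∑' k, a ^ k) * c)) :=
    ((continuous_id.matrix_mul continuous_const).tendsto _).comp ha.hasSum.tendsto_sum_nat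
  simpa only [← Matrix.affine_iterate_eq hx, Matrix.zero_mul, zero_add] using hpow.add hgeom

end AffineRecurrence

theorem Units.summable_conj_pow {R : Type*} [Ring R] [TopologicalSpace R] [IsTopologicalRing R]
    (u : Rˣ) {b : R} (hb : Summable (b ^ ·)) : Summable (((u : R) * b * ↑u⁻¹) ^ ·) := by
  simpa only [Units.conj_pow] using (hb.mul_left (u : R)).mul_right (↑u⁻¹ : R)

section LinftyNorm

attribute [local instance] Matrix.linftyOpSeminormedAddCommGroup Matrix.linftyOpNormedRing
  Matrix.linftyOpNormedAlgebra

theorem Matrix.linfty_opNorm_lt_of_forall_sum_norm_lt {m n α : Type*} [Fintype m] [Fintype n]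
    [SeminormedAddCommGroup α] {B : Matrix m n α} {r : ℝ} (hr : 0 < r)
    (hB : ∀ i, ∑ j, ‖B i j‖ < r) : ‖B‖ < r := by
  lift r to NNReal using hr.le
  rw [linfty_opNorm_def, NNReal.coe_lt_coe, Finset.sup_lt_iff (by exact_mod_cast hr)]
  intro i _
  rw [← NNReal.coe_lt_coe]
  push_cast
  exact hB i

theorem Matrix.summable_pow_of_forall_sum_abs_lt_one {m : Type*} [Fintype m] [DecidableEq m]
    {B : Matrix m m ℝ} (hB : ∀ i, ∑ j, |B i j| < 1) : Summable (B ^ ·) :=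
  have : CompleteSpace (Matrix m m ℝ) := FiniteDimensional.complete ℝ _
  summable_geometric_of_norm_lt_one
    (linfty_opNorm_lt_of_forall_sum_norm_lt one_pos (by simpa only [Real.norm_eq_abs]))

end LinftyNorm

section NormalizedAdjacency

variable {ι : Type*} [Fintype ι] {A : Matrix ι ι ℝ} {d : ι → ℝ}

theorem rowSum_add_one_pos (hA : ∀ i j, 0 ≤ A i j) (hd : ∀ i, d i = ∑ j, A i j) (i : ι) :
    0 < d i + 1 := by
  rw [hd]
  linarith [Finset.sum_nonneg fun j (_ : j ∈ univ) => hA i j]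

variable [DecidableEq ι]

theorem Matrix.exists_units_conj_div_sqrt (M : Matrix ι ι ℝ) {w : ι → ℝ} (hw : ∀ i, 0 < w i) :
    ∃ u : (Matrix ι ι ℝ)ˣ, of (fun i j => M i j / √(w i * w j)) =
      (u : Matrix ι ι ℝ) * of (fun i j => M i j / w i) * (↑u⁻¹ : Matrix ι ι ℝ) := by
  have hs : ∀ i, √(w i) ≠ 0 := fun i => (Real.sqrt_pos.2 (hw i)).ne'
  refine ⟨⟨diagonal (fun i => √(w i)), diagonal (fun i => (√(w i))⁻¹), ?_, ?_⟩, ?_⟩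
  · simp [diagonal_mul_diagonal, hs]
  · simp [diagonal_mul_diagonal, hs]
  · ext i j
    simp only [Units.inv_mk, Units.val_mk, mul_diagonal, diagonal_mul, of_apply]
    rw [Real.sqrt_mul (hw i).le]
    field_simp [hs i, hs j]
    rw [Real.sq_sqrt (hw i).le, mul_div_cancel_right₀ _ (hw i).ne']

theorem sum_abs_offDiag_div_rowSum_add_one_lt_one (hA : ∀ i j, 0 ≤ A i j)
    (hd : ∀ i, d i = ∑ j, A i j) (i : ι) :
    ∑ j, |(if i = j then 0 else A i j) / (d i + 1)| < 1 := by
  have hd1 := rowSum_add_one_pos hA hd i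
  calc ∑ j, |(if i = j then 0 else A i j) / (d i + 1)|
      ≤ ∑ j, A i j / (d i + 1) := by
        gcongr with j
        rw [abs_div, abs_of_pos hd1]
        gcongr
        split_ifs
        · simpa using hA i j
        · exact (abs_of_nonneg (hA i j)).le
    _ = d i / (d i + 1) := by rw [← Finset.sum_div, hd]
    _ < 1 := by rw [div_lt_one hd1]; linarith

end NormalizedAdjacency

theorem gtcn_deep_limit_general
    (N F : ℕ) (A : Matrix (Fin N) (Fin N) ℝ)
    (h01 : ∀ i j, A i j = 0 ∨ A i j = 1)
    (d : Fin N → ℝ) (hd : ∀ i, d i = ∑ j, A i j)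
    (A1 : Matrix (Fin N) (Fin N) ℝ)
    (hA1 : ∀ i j, A1 i j =
      if i = j then 0 else A i j / Real.sqrt ((d i + 1) * (d j + 1)))
    (A2 : Matrix (Fin N) (Fin N) ℝ)
    (Z : Matrix (Fin N) (Fin F) ℝ)
    (H : ℕ → Matrix (Fin N) (Fin F) ℝ)
    (hHrec : ∀ m : ℕ, H (m + 1) = A1 * H m + A2 * Z) :
    Tendsto (fun L : ℕ => H L) atTop (nhds ((1 - A1)⁻¹ * A2 * Z)) := by
  have hA : ∀ i j, 0 ≤ A i j := fun i j => by rcases h01 i j with h | h <;> simp [h]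
  set M : Matrix (Fin N) (Fin N) ℝ := of fun i j => if i = j then 0 else A i j
  have hA1M : A1 = of fun i j => M i j / √((d i + 1) * (d j + 1)) := by
    ext i j
    rw [hA1]
    split_ifs <;> simp [M, *]
  obtain ⟨u, hu⟩ := M.exists_units_conj_div_sqrt (rowSum_add_one_pos hA hd)
  have hsummable : Summable (A1 ^ ·) := by
    rw [hA1M, hu]
    exact u.summable_conj_pow
      (summable_pow_of_forall_sum_abs_lt_one (sum_abs_offDiag_div_rowSum_add_one_lt_one hA hd))
  rw [Matrix.mul_assoc, inv_eq_right_inv hsummable.one_sub_mul_tsum_pow]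
  exact tendsto_affine_iterate hsummable hHrec

/-- Theorem 1: the GTCN node representation converges, as the
number of propagation layers tends to infinity, to
`(I - A1)⁻¹ · A2 · Z` (entrywise convergence). -/
theorem gtcn_deep_limit
    (N F : ℕ) (A : Matrix (Fin N) (Fin N) ℝ)
    (hsymm : A.IsSymm)
    (h01 : ∀ i j, A i j = 0 ∨ A i j = 1)
    (hdiag : ∀ i, A i i = 0)
    (d : Fin N → ℝ) (hd : ∀ i, d i = ∑ j, A i j)
    (A1 : Matrix (Fin N) (Fin N) ℝ)
    (hA1 : ∀ i j, A1 i j =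
      if i = j then 0 else A i j / Real.sqrt ((d i + 1) * (d j + 1)))
    (A2 : Matrix (Fin N) (Fin N) ℝ)
    (hA2 : A2 = Matrix.diagonal fun i => 1 / (d i + 1))
    (Z : Matrix (Fin N) (Fin F) ℝ)
    (H : ℕ → Matrix (Fin N) (Fin F) ℝ)
    (hH0 : H 0 = Z)
    (hHrec : ∀ m : ℕ, H (m + 1) = A1 * H m + A2 * Z) :
    Tendsto (fun L : ℕ => H L) atTop (nhds ((1 - A1)⁻¹ * A2 * Z)) :=
  gtcn_deep_limit_general N F A h01 d hd A1 hA1 A2 Z H hHrec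
end

section
/- (Proposition 5, GTCN part — two layers distinguish nodes) Consider the complete graph on N ≥ 1 vertices. Let Z ∈ ℝ^{N×F} with rows z_u, and define the GTCN recursion on the complete graph by g_u(0) = z_u and g_u(m+1) = (1/N) ∑_{v ≠ u} g_v(m) + (1/N) z_u. Then after two propagation layers, g_u(2) = ((N−1)/N) c + (1/N) z_u, where c = (1/N) ∑_{v=1}^{N} z_v is the common value of g_v(1). Consequently, for any two vertices u, w with z_u ≠ z_w one has g_u(2) ≠ g_w(2); i.e., a GTCN with more than one layer learns distinguishable representations for nodes with distinct initial features. -/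
/-! On the complete graph the first layer sees every feature exactly once (the neighbours plus
the self term), so all nodes hold the same mean `c` after one layer. The second layer therefore
gives each node a common term plus `(1/N) z_u`, and `x ↦ a + x / N` is injective. -/

open Finset

section CompleteGraphGTCN

variable {ι K M : Type*} [Fintype ι] [DecidableEq ι] [Field K] [AddCommGroup M] [Module K M]
  {Z : ι → M} {g : ℕ → ι → M}

lemma sum_erase_const_eq_card_sub_one_smul (u : ι) (x : M) :
    ∑ _v ∈ univ.erase u, x = ((Fintype.card ι : K) - 1) • x := by
  have hcard : 1 ≤ Fintype.card ι := Fintype.card_pos_iff.mpr ⟨u⟩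
  rw [sum_const, card_erase_of_mem (mem_univ u), card_univ, ← Nat.cast_smul_eq_nsmul K,
    Nat.cast_sub hcard, Nat.cast_one]

variable (hg0 : ∀ u, g 0 u = Z u)
  (hgrec : ∀ (m : ℕ) (u : ι),
    g (m + 1) u = (Fintype.card ι : K)⁻¹ • (∑ v ∈ univ.erase u, g m v)
      + (Fintype.card ι : K)⁻¹ • Z u)
include hg0 hgrec

lemma gtcn_complete_layer_one (u : ι) :
    g 1 u = (Fintype.card ι : K)⁻¹ • ∑ v, Z v := by
  rw [hgrec 0 u, ← smul_add]
  simp only [hg0]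
  rw [sum_erase_add univ _ (mem_univ u)]

lemma gtcn_complete_layer_two (u : ι) :
    g 2 u = (((Fintype.card ι : K) - 1) / Fintype.card ι) •
        ((Fintype.card ι : K)⁻¹ • ∑ v, Z v) + (Fintype.card ι : K)⁻¹ • Z u := by
  rw [hgrec 1 u, sum_congr rfl fun v _ => gtcn_complete_layer_one hg0 hgrec v,
    sum_erase_const_eq_card_sub_one_smul (K := K) u, smul_smul, div_eq_inv_mul]

lemma gtcn_complete_layer_two_ne [CharZero K] {u w : ι} (hZ : Z u ≠ Z w) :
    g 2 u ≠ g 2 w := by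
  have hcard : (Fintype.card ι : K) ≠ 0 := Nat.cast_ne_zero.mpr (Fintype.card_pos_iff.mpr ⟨u⟩).ne'
  rw [gtcn_complete_layer_two hg0 hgrec, gtcn_complete_layer_two hg0 hgrec, Ne, add_right_inj]
  exact fun h => hZ (smul_right_injective M (inv_ne_zero hcard) h)

end CompleteGraphGTCN

theorem gtcn_complete_graph_two_layers_distinguish_general
    (N F : ℕ)
    (Z : Matrix (Fin N) (Fin F) ℝ)
    (g : ℕ → Fin N → (Fin F → ℝ))
    (hg0 : ∀ u, g 0 u = Z u)
    (hgrec : ∀ (m : ℕ) (u : Fin N),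
      g (m + 1) u =
        (N : ℝ)⁻¹ • (∑ v ∈ Finset.univ.erase u, g m v) + (N : ℝ)⁻¹ • Z u) :
    (∀ u : Fin N,
      g 2 u = (((N : ℝ) - 1) / N) • ((N : ℝ)⁻¹ • ∑ v : Fin N, Z v)
        + (N : ℝ)⁻¹ • Z u) ∧
    (∀ u w : Fin N, Z u ≠ Z w → g 2 u ≠ g 2 w) := by
  have hgrec' : ∀ (m : ℕ) (u : Fin N), g (m + 1) u =
      (Fintype.card (Fin N) : ℝ)⁻¹ • (∑ v ∈ univ.erase u, g m v)
        + (Fintype.card (Fin N) : ℝ)⁻¹ • Z u := by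
    simpa only [Fintype.card_fin] using hgrec
  refine ⟨fun u => ?_, fun u w => gtcn_complete_layer_two_ne hg0 hgrec'⟩
  simpa only [Fintype.card_fin] using gtcn_complete_layer_two hg0 hgrec' u

/-- Proposition 5, GTCN part — two layers distinguish nodes:
On the complete graph on `N ≥ 1` vertices, with the GTCN recursion
`g_u(0) = z_u`, `g_u(m+1) = (1/N) ∑_{v ≠ u} g_v(m) + (1/N) z_u`, after two
layers `g_u(2) = ((N-1)/N) c + (1/N) z_u` where `c = (1/N) ∑_v z_v`;
consequently nodes with distinct initial features remain distinguishable. -/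
theorem gtcn_complete_graph_two_layers_distinguish
    (N F : ℕ) (hN : 1 ≤ N)
    (Z : Matrix (Fin N) (Fin F) ℝ)
    (g : ℕ → Fin N → (Fin F → ℝ))
    (hg0 : ∀ u, g 0 u = Z u)
    (hgrec : ∀ (m : ℕ) (u : Fin N),
      g (m + 1) u =
        (N : ℝ)⁻¹ • (∑ v ∈ Finset.univ.erase u, g m v) + (N : ℝ)⁻¹ • Z u) :
    (∀ u : Fin N,
      g 2 u = (((N : ℝ) - 1) / N) • ((N : ℝ)⁻¹ • ∑ v : Fin N, Z v)
        + (N : ℝ)⁻¹ • Z u) ∧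
    (∀ u w : Fin N, Z u ≠ Z w → g 2 u ≠ g 2 w) :=
  gtcn_complete_graph_two_layers_distinguish_general N F Z g hg0 hgrec
end
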